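/- arXiv:2603.24628 — 2 statements merged into one kernel-verified Lean document; each statement's English description precedes it below -/
import Mathlib

section
/- For four distinct points y, y₁, y₁₂, y₂ in the complex plane ℂ (viewed as ℝ²) with light cone lifts Y, Y₁, Y₁₂, Y₂, let cr = (⟨Y,Y₁⟩⟨Y₁₂,Y₂⟩ + ⟨Y,Y₂⟩⟨Y₁,Y₁₂⟩ - ⟨Y,Y₁₂⟩⟨Y₁,Y₂⟩) / (2⟨Y,Y₂⟩⟨Y₁,Y₁₂⟩); then, when the classical complex cross ratio ((y-y₁)(y₁₂-y₂))/((y₁-y₁₂)(y₂-y)) is real, cr equals it. -/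
/-- The Lorentzian bilinear form of signature (3, 1) on ℝ⁴. -/
noncomputable def lorentz4 (a b : Fin 4 → ℝ) : ℝ :=
  ∑ i : Fin 4, (if (i : ℕ) = 3 then (-1 : ℝ) else 1) * a i * b i

/-- The light cone lift of a point of ℂ ≅ ℝ². -/
noncomputable def liftC (z : ℂ) : Fin 4 → ℝ :=
  ![2 * z.re, 2 * z.im, 1 - ‖z‖ ^ 2, 1 + ‖z‖ ^ 2]

/-- The classical complex cross ratio. -/
noncomputable def crC (y y₁ y₁₂ y₂ : ℂ) : ℂ :=
  ((y - y₁) * (y₁₂ - y₂)) / ((y₁ - y₁₂) * (y₂ - y))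

lemma lorentz4_liftC (a b : ℂ) :
    lorentz4 (liftC a) (liftC b) = -2 * Complex.normSq (a - b) := by
  have hn : ∀ z : ℂ, ‖z‖ ^ 2 = z.re ^ 2 + z.im ^ 2 := by
    intro z
    rw [Complex.sq_norm, Complex.normSq_apply]; ring
  simp only [lorentz4, liftC, Fin.sum_univ_four, Complex.normSq_apply,
    Complex.sub_re, Complex.sub_im, hn,
    show ((0 : Fin 4) : ℕ) = 0 from rfl, show ((1 : Fin 4) : ℕ) = 1 from rfl,
    show ((2 : Fin 4) : ℕ) = 2 from rfl, show ((3 : Fin 4) : ℕ) = 3 from rfl,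
    Matrix.cons_val_zero, Matrix.cons_val_one, Matrix.head_cons, Matrix.cons_val]
  norm_num
  ring

/-- When the classical cross ratio of four distinct points of ℂ is real, it agrees
with the light-cone formula. -/
theorem stmt_7 (y y₁ y₁₂ y₂ : ℂ)
    (h01 : y ≠ y₁) (h02 : y ≠ y₁₂) (h03 : y ≠ y₂)
    (h12 : y₁ ≠ y₁₂) (h13 : y₁ ≠ y₂) (h23 : y₁₂ ≠ y₂)
    (hreal : (crC y y₁ y₁₂ y₂).im = 0) :
    (lorentz4 (liftC y) (liftC y₁) * lorentz4 (liftC y₁₂) (liftC y₂)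
      + lorentz4 (liftC y) (liftC y₂) * lorentz4 (liftC y₁) (liftC y₁₂)
      - lorentz4 (liftC y) (liftC y₁₂) * lorentz4 (liftC y₁) (liftC y₂))
      / (2 * lorentz4 (liftC y) (liftC y₂) * lorentz4 (liftC y₁) (liftC y₁₂))
    = (crC y y₁ y₁₂ y₂).re := by
  set p : ℂ := (y - y₁) * (y₁₂ - y₂) with hp
  set q : ℂ := (y₁ - y₁₂) * (y₂ - y) with hq
  have hqne : Complex.normSq q ≠ 0 := by
    rw [hq, Complex.normSq_mul]
    exact mul_ne_zero (by simpa [Complex.normSq_eq_zero, sub_eq_zero] using h12)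
      (by simpa [Complex.normSq_eq_zero, sub_eq_zero] using fun h => h03 h.symm)
  have e1 : Complex.normSq (y - y₁) * Complex.normSq (y₁₂ - y₂) = Complex.normSq p := by
    rw [hp, Complex.normSq_mul]
  have e2 : Complex.normSq (y - y₂) * Complex.normSq (y₁ - y₁₂) = Complex.normSq q := by
    rw [hq, Complex.normSq_mul, show y - y₂ = -(y₂ - y) by ring, Complex.normSq_neg, mul_comm]
  have e3 : Complex.normSq (y - y₁₂) * Complex.normSq (y₁ - y₂) = Complex.normSq (p - q) := by
    rw [show p - q = (y - y₁₂) * (y₁ - y₂) by rw [hp, hq]; ring, Complex.normSq_mul]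
  have e4 : Complex.normSq (p - q)
      = Complex.normSq p + Complex.normSq q - 2 * (p.re * q.re + p.im * q.im) := by
    simp only [Complex.normSq_apply, Complex.sub_re, Complex.sub_im]; ring
  have ecr : (crC y y₁ y₁₂ y₂).re
      = (p.re * q.re + p.im * q.im) / Complex.normSq q := by
    rw [crC, ← hp, ← hq, Complex.div_re, ← add_div]
  rw [lorentz4_liftC, lorentz4_liftC, lorentz4_liftC, lorentz4_liftC, lorentz4_liftC,
    lorentz4_liftC, ecr]
  rw [show (-2 * Complex.normSq (y - y₁)) * (-2 * Complex.normSq (y₁₂ - y₂))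
      = 4 * (Complex.normSq (y - y₁) * Complex.normSq (y₁₂ - y₂)) by ring,
    show (-2 * Complex.normSq (y - y₂)) * (-2 * Complex.normSq (y₁ - y₁₂))
      = 4 * (Complex.normSq (y - y₂) * Complex.normSq (y₁ - y₁₂)) by ring,
    show (-2 * Complex.normSq (y - y₁₂)) * (-2 * Complex.normSq (y₁ - y₂))
      = 4 * (Complex.normSq (y - y₁₂) * Complex.normSq (y₁ - y₂)) by ring,
    show 2 * (-2 * Complex.normSq (y - y₂)) * (-2 * Complex.normSq (y₁ - y₁₂))
      = 8 * (Complex.normSq (y - y₂) * Complex.normSq (y₁ - y₁₂)) by ring,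
    e1, e2, e3, e4]
  generalize Complex.normSq q = Q at hqne ⊢
  generalize Complex.normSq p = P
  generalize p.re * q.re + p.im * q.im = T
  field_simp
  ring
end

section
/- Let f : V₁ × V₂ → ℝ be a function on faces of ℤ² (V₁, V₂ = ℤ), nowhere zero. Then the following are equivalent: (1) for every vertex, the cross ratios cr₁, cr₂, cr₃, cr₄ of the four faces around it (ordered counterclockwise, so faces (i,j), (i-1,j), (i-1,j-1), (i,j-1)) satisfy cr₁ · cr₂⁻¹ · cr₃ · cr₄⁻¹ = 1; (2) there exist nowhere-zero functions a : ℤ → ℝ and b : ℤ → ℝ with f(i,j) = a(i)/b(j) for all (i,j). -/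
/-- Factorization of cross ratios for discrete isothermic nets: the product
condition around every vertex holds iff f(i,j) = a(i)/b(j). -/
theorem stmt_9 (f : ℤ → ℤ → ℝ) (hf : ∀ i j, f i j ≠ 0) :
    (∀ i j : ℤ,
        f i j * (f (i - 1) j)⁻¹ * f (i - 1) (j - 1) * (f i (j - 1))⁻¹ = 1) ↔
    (∃ a b : ℤ → ℝ, (∀ i, a i ≠ 0) ∧ (∀ j, b j ≠ 0) ∧
        ∀ i j, f i j = a i / b j) := by
  constructor
  · intro h
    -- cross equation in multiplicative form
    have hx : ∀ i j : ℤ, f i j * f (i - 1) (j - 1) = f (i - 1) j * f i (j - 1) := by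
      intro i j
      have hk := h i j
      field_simp at hk
      rw [div_eq_one_iff_eq (mul_ne_zero (hf (i - 1) j) (hf i (j - 1)))] at hk
      exact hk
    have key : ∀ i j : ℤ, f i j * f (i - 1) 0 = f (i - 1) j * f i 0 := by
      intro i j
      induction j using Int.induction_on with
      | zero => ring
      | succ k ih =>
        have hk := hx i (k + 1)
        simp only [add_sub_cancel_right] at hk
        have goal' : f i (k + 1) * f (i - 1) 0 * f (i - 1) k =
            f (i - 1) (k + 1) * f i 0 * f (i - 1) k := by
          linear_combination f (i - 1) 0 * hk + f (i - 1) (k + 1) * ih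
        exact mul_right_cancel₀ (hf (i - 1) k) goal'
      | pred k ih =>
        have hk := hx i (-k)
        have goal' : f i (-(k : ℤ) - 1) * f (i - 1) 0 * f (i - 1) (-k) * f i (-k) =
            f (i - 1) (-(k : ℤ) - 1) * f i 0 * f (i - 1) (-k) * f i (-k) := by
          linear_combination f (i - 1) (-(k : ℤ)) * f i (-(k : ℤ) - 1) * ih -
            f i 0 * f (i - 1) (-(k : ℤ)) * hk
        exact mul_right_cancel₀ (hf (i - 1) (-k))
          (mul_right_cancel₀ (hf i (-k)) goal')
    have key2 : ∀ i j : ℤ, f i j * f 0 0 = f i 0 * f 0 j := by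
      intro i j
      induction i using Int.induction_on with
      | zero => ring
      | succ k ih =>
        have hk := key (k + 1) j
        simp only [add_sub_cancel_right] at hk
        have goal' : f (k + 1) j * f 0 0 * f k 0 =
            f (k + 1) 0 * f 0 j * f k 0 := by
          linear_combination f 0 0 * hk + f (k + 1) 0 * ih
        exact mul_right_cancel₀ (hf k 0) goal'
      | pred k ih =>
        have hk := key (-k) j
        have goal' : f (-(k : ℤ) - 1) j * f 0 0 * f (-(k : ℤ)) 0 * f (-(k : ℤ)) j =
            f (-(k : ℤ) - 1) 0 * f 0 j * f (-(k : ℤ)) 0 * f (-(k : ℤ)) j := by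
          linear_combination f (-(k : ℤ)) 0 * f (-(k : ℤ) - 1) j * ih -
            f 0 j * f (-(k : ℤ)) 0 * hk
        exact mul_right_cancel₀ (hf (-k) 0)
          (mul_right_cancel₀ (hf (-k) j) goal')
    refine ⟨fun i => f i 0, fun j => f 0 0 / f 0 j, fun i => hf i 0,
      fun j => div_ne_zero (hf 0 0) (hf 0 j), fun i j => ?_⟩
    have h00 := hf 0 0
    have h0j := hf 0 j
    field_simp
    linear_combination key2 i j
  · rintro ⟨a, b, ha, hb, hab⟩ i j
    rw [hab i j, hab (i - 1) j, hab (i - 1) (j - 1), hab i (j - 1)]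
    have h1 := ha i; have h2 := ha (i - 1)
    have h3 := hb j; have h4 := hb (j - 1)
    field_simp
end
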